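/- arXiv:1407.8047 — 3 statements merged into one kernel-verified Lean document; each statement's English description precedes it below -/
import Mathlib

section
/- Let f : [0,∞) → [0,∞) be continuous, strictly positive and nondecreasing on (0,∞), with f(0) = 0 and ∫₀^ε dt/f(t) < +∞ for some ε > 0. Then there exists δ > 0 and a continuously differentiable function τ : [0,δ] → [0,∞) with τ(0) = 0, τ(t) > 0 for t > 0, and τ'(t) = f(τ(t)) for t ∈ (0,δ). -/
/-!
Because `1 / f` is integrable near `0`, `F x = ∫₀ˣ dt / f t` is a continuous, strictly increasing
map of `[0, ε]` onto `[0, F ε]`, and its inverse `τ` is the solution. By the inverse function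
theorem `τ' = 1 / F'(τ) = f ∘ τ` on `(0, F ε)`, and since `f ∘ τ` is continuous up to the
endpoints, the derivative extends there and `τ` is `C¹` on the closed interval.
-/

open MeasureTheory Set Filter Topology

theorem ContinuousOn.exists_continuous_rightInvOn_Icc {F : ℝ → ℝ} {a b : ℝ} (hab : a ≤ b)
    (hF : ContinuousOn F (Icc a b)) (hmono : StrictMonoOn F (Icc a b)) :
    ∃ τ : ℝ → ℝ, Continuous τ ∧ (∀ t, τ t ∈ Icc a b) ∧
      RightInvOn τ F (Icc (F a) (F b)) := by
  have hFab : F a ≤ F b := hmono.monotoneOn (left_mem_Icc.2 hab) (right_mem_Icc.2 hab) hab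
  have hbij : BijOn F (Icc a b) (Icc (F a) (F b)) :=
    ⟨fun x hx => ⟨hmono.monotoneOn (left_mem_Icc.2 hab) hx hx.1,
        hmono.monotoneOn hx (right_mem_Icc.2 hab) hx.2⟩,
      hmono.injOn, fun _ hy => intermediate_value_Icc hab hF hy⟩
  let e : Icc a b ≃ₜ Icc (F a) (F b) :=
    (hF.domRestrict.subtype_mk fun x => hbij.mapsTo x.2).homeoOfEquivCompactToT2 (f := hbij.equiv F)
  refine ⟨fun t => e.symm (projIcc (F a) (F b) hFab t), by fun_prop,
    fun t => (e.symm _).2, fun t ht => ?_⟩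
  exact (congrArg Subtype.val (e.apply_symm_apply _)).trans
    (congrArg Subtype.val (projIcc_of_mem hFab ht))

theorem hasDerivWithinAt_Icc_of_hasDerivAt_Ioo {E : Type*} [NormedAddCommGroup E]
    [NormedSpace ℝ E] {f f' : ℝ → E} {a b : ℝ} (hab : a < b) (hf : ContinuousOn f (Icc a b))
    (hf' : ContinuousOn f' (Icc a b)) (hderiv : ∀ x ∈ Ioo a b, HasDerivAt f (f' x) x) :
    ∀ x ∈ Icc a b, HasDerivWithinAt f (f' x) (Icc a b) x := by
  have hdiff : DifferentiableOn ℝ f (Ioo a b) := fun x hx =>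
    (hderiv x hx).differentiableAt.differentiableWithinAt
  have hderiv_eq : EqOn (deriv f) f' (Ioo a b) := fun x hx => (hderiv x hx).deriv
  intro x hx
  rcases hx.1.eq_or_lt with rfl | hax
  · have hlim : Tendsto f' (𝓝[>] a) (𝓝 (f' a)) := by
      rw [← nhdsWithin_Ioo_eq_nhdsGT hab]
      exact (hf' a hx).mono Ioo_subset_Icc_self
    refine (hasDerivWithinAt_Ici_of_tendsto_deriv hdiff ((hf a hx).mono Ioo_subset_Icc_self)
      (Ioo_mem_nhdsGT hab) ?_).mono Icc_subset_Ici_self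
    exact hlim.congr' (eventuallyEq_of_mem (Ioo_mem_nhdsGT hab) hderiv_eq.symm)
  rcases hx.2.eq_or_lt with rfl | hxb
  · have hlim : Tendsto f' (𝓝[<] x) (𝓝 (f' x)) := by
      rw [← nhdsWithin_Ioo_eq_nhdsLT hab]
      exact (hf' x hx).mono Ioo_subset_Icc_self
    refine (hasDerivWithinAt_Iic_of_tendsto_deriv hdiff ((hf x hx).mono Ioo_subset_Icc_self)
      (Ioo_mem_nhdsLT hab) ?_).mono Icc_subset_Iic_self
    exact hlim.congr' (eventuallyEq_of_mem (Ioo_mem_nhdsLT hab) hderiv_eq.symm)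
  exact (hderiv x ⟨hax, hxb⟩).hasDerivWithinAt

theorem contDiffOn_one_Icc_of_hasDerivAt_Ioo {E : Type*} [NormedAddCommGroup E]
    [NormedSpace ℝ E] {f f' : ℝ → E} {a b : ℝ} (hab : a < b) (hf : ContinuousOn f (Icc a b))
    (hf' : ContinuousOn f' (Icc a b)) (hderiv : ∀ x ∈ Ioo a b, HasDerivAt f (f' x) x) :
    ContDiffOn ℝ 1 f (Icc a b) := by
  have hwithin := hasDerivWithinAt_Icc_of_hasDerivAt_Ioo hab hf hf' hderiv
  rw [contDiffOn_one_iff_derivWithin (uniqueDiffOn_Icc hab)]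
  exact ⟨fun x hx => (hwithin x hx).differentiableWithinAt,
    hf'.congr fun x hx => (hwithin x hx).derivWithin (uniqueDiffOn_Icc hab x hx)⟩

theorem strictMonoOn_primitive_of_pos {g : ℝ → ℝ} {a b : ℝ} (hg : IntegrableOn g (Icc a b))
    (hpos : ∀ x ∈ Ioo a b, 0 < g x) : StrictMonoOn (fun x => ∫ t in a..x, g t) (Icc a b) := by
  intro x hx y hy hxy
  have hint : ∀ z ∈ Icc a b, IntervalIntegrable g volume a z := fun z hz =>
    (hg.mono_set (uIcc_subset_Icc (left_mem_Icc.2 (hx.1.trans hx.2)) hz)).intervalIntegrable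
  have hpos_xy : 0 < ∫ t in x..y, g t :=
    intervalIntegral.intervalIntegral_pos_of_pos_on
      ((hint x hx).symm.trans (hint y hy))
      (fun z hz => hpos z ⟨hx.1.trans_lt hz.1, hz.2.trans_le hy.2⟩) hxy
  have := intervalIntegral.integral_interval_sub_left (hint y hy) (hint x hx)
  simp only
  linarith

theorem continuousOn_primitive_Icc {g : ℝ → ℝ} {a b : ℝ} (hab : a ≤ b)
    (hg : IntegrableOn g (Icc a b)) : ContinuousOn (fun x => ∫ t in a..x, g t) (Icc a b) := by
  rw [← uIcc_of_le hab] at hg ⊢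
  exact intervalIntegral.continuousOn_primitive_interval hg

theorem hasDerivAt_primitive_of_continuousOn_Ioo {g : ℝ → ℝ} {a b x : ℝ}
    (hg : IntegrableOn g (Icc a b)) (hgc : ContinuousOn g (Ioo a b)) (hx : x ∈ Ioo a b) :
    HasDerivAt (fun y => ∫ t in a..y, g t) (g x) x :=
  intervalIntegral.integral_hasDerivAt_right
    (hg.mono_set (uIcc_subset_Icc (left_mem_Icc.2 (hx.1.trans hx.2).le)
      (Ioo_subset_Icc_self hx))).intervalIntegrable
    (hgc.stronglyMeasurableAtFilter isOpen_Ioo x hx) (hgc.continuousAt (Ioo_mem_nhds hx.1 hx.2))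

theorem exists_inverse_primitive_one_div {f : ℝ → ℝ} (hfc : ContinuousOn f (Ici 0))
    (hfpos : ∀ t, 0 < t → 0 < f t) {ε : ℝ} (hε : 0 < ε)
    (hint : IntegrableOn (fun t => 1 / f t) (Ioo 0 ε)) :
    ∃ T > 0, ∃ τ : ℝ → ℝ, Continuous τ ∧ (∀ t, 0 ≤ τ t) ∧ τ 0 = 0 ∧
      (∀ t ∈ Ioc 0 T, 0 < τ t) ∧ ∀ t ∈ Ioo 0 T, HasDerivAt τ (f (τ t)) t := by
  have hint' : IntegrableOn (fun t => 1 / f t) (Icc 0 ε) := by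
    rwa [integrableOn_Icc_iff_integrableOn_Ioo]
  have hrecip_cont : ContinuousOn (fun t => 1 / f t) (Ioo 0 ε) :=
    continuousOn_const.div (hfc.mono fun t ht => ht.1.le) fun t ht => (hfpos t ht.1).ne'
  set F : ℝ → ℝ := fun x => ∫ t in (0 : ℝ)..x, 1 / f t
  have hF0 : F 0 = 0 := intervalIntegral.integral_same
  have hF_mono : StrictMonoOn F (Icc 0 ε) :=
    strictMonoOn_primitive_of_pos hint' fun x hx => one_div_pos.2 (hfpos x hx.1)
  have hF_cont : ContinuousOn F (Icc 0 ε) := continuousOn_primitive_Icc hε.le hint'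
  obtain ⟨τ, hτ_cont, hτ_mem, hFτ⟩ := hF_cont.exists_continuous_rightInvOn_Icc hε.le hF_mono
  rw [hF0] at hFτ
  have h0 : (0 : ℝ) ∈ Icc 0 ε := left_mem_Icc.2 hε.le
  have hT : 0 < F ε := hF0 ▸ hF_mono h0 (right_mem_Icc.2 hε.le) hε
  have hτ_pos : ∀ t ∈ Ioc 0 (F ε), 0 < τ t := fun t ht =>
    (hF_mono.lt_iff_lt h0 (hτ_mem t)).1 (by rw [hFτ (Ioc_subset_Icc_self ht), hF0]; exact ht.1)
  have hτ_lt : ∀ t ∈ Ico 0 (F ε), τ t < ε := fun t ht =>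
    (hF_mono.lt_iff_lt (hτ_mem t) (right_mem_Icc.2 hε.le)).1
      (by rw [hFτ (Ico_subset_Icc_self ht)]; exact ht.2)
  refine ⟨F ε, hT, τ, hτ_cont, fun t => (hτ_mem t).1,
    hF_mono.injOn (hτ_mem 0) h0 ((hFτ (left_mem_Icc.2 hT.le)).trans hF0.symm), hτ_pos,
    fun t ht => ?_⟩
  have hx : τ t ∈ Ioo 0 ε := ⟨hτ_pos t (Ioo_subset_Ioc_self ht), hτ_lt t (Ioo_subset_Ico_self ht)⟩
  have hF_deriv := hasDerivAt_primitive_of_continuousOn_Ioo hint' hrecip_cont hx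
  simpa using hF_deriv.of_local_left_inverse hτ_cont.continuousAt
    (one_div_pos.2 (hfpos _ hx.1)).ne'
    (eventually_of_mem (Ioo_mem_nhds ht.1 ht.2) fun s hs => hFτ (Ioo_subset_Icc_self hs))

theorem stmt10_general (f : ℝ → ℝ) (hfc : ContinuousOn f (Set.Ici 0))
    (hfpos : ∀ t : ℝ, 0 < t → 0 < f t)
    (ε : ℝ) (hε : 0 < ε)
    (hint : IntegrableOn (fun t : ℝ => 1 / f t) (Set.Ioo 0 ε)) :
    ∃ δ > (0 : ℝ), ∃ τ : ℝ → ℝ, ContDiffOn ℝ 1 τ (Set.Icc 0 δ) ∧ τ 0 = 0 ∧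
      (∀ t : ℝ, 0 < t → t ≤ δ → 0 < τ t) ∧
      (∀ t ∈ Set.Ioo 0 δ, HasDerivAt τ (f (τ t)) t) := by
  obtain ⟨T, hT, τ, hτ_cont, hτ_nonneg, hτ0, hτ_pos, hderiv⟩ :=
    exists_inverse_primitive_one_div hfc hfpos hε hint
  refine ⟨T, hT, τ, ?_, hτ0, fun t ht htT => hτ_pos t ⟨ht, htT⟩, hderiv⟩
  exact contDiffOn_one_Icc_of_hasDerivAt_Ioo hT hτ_cont.continuousOn
    (hfc.comp hτ_cont.continuousOn fun t _ => hτ_nonneg t) hderiv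

theorem stmt10 (f : ℝ → ℝ) (hfc : ContinuousOn f (Set.Ici 0)) (hf0 : f 0 = 0)
    (hfpos : ∀ t : ℝ, 0 < t → 0 < f t)
    (hmono : MonotoneOn f (Set.Ioi 0))
    (ε : ℝ) (hε : 0 < ε)
    (hint : IntegrableOn (fun t : ℝ => 1 / f t) (Set.Ioo 0 ε)) :
    ∃ δ > (0 : ℝ), ∃ τ : ℝ → ℝ, ContDiffOn ℝ 1 τ (Set.Icc 0 δ) ∧ τ 0 = 0 ∧
      (∀ t : ℝ, 0 < t → t ≤ δ → 0 < τ t) ∧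
      (∀ t ∈ Set.Ioo 0 δ, HasDerivAt τ (f (τ t)) t) :=
  stmt10_general f hfc hfpos ε hε hint
end

section
/- Let w : [0,T] → [0,∞) be continuous and bounded, let G : [0,∞) → [0,∞) be continuous increasing with G(0)=0, and suppose for some constants C > 0 and p > 2 one has w(s) ≤ C ∫₀^s G(w(t)) (1 + (s−t)^{−1/2}) dt for all s ∈ (0,T]. Then w(s)^p ≤ C̃ ∫₀^s G^p(w(t)) dt for some constant C̃ depending only on C, p, T. If moreover ∫_{0+} du/G^p(u^{1/p}) = +∞, then w ≡ 0. -/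
/-!
Hölder's inequality with exponents `p` and `q = p / (p - 1) < 2` absorbs the kernel
`1 + (s - t) ^ (-1/2)`, whose `q`-th power is integrable, and gives `w s ^ p ≤ K ∫₀ˢ G (w t) ^ p`.
With `u = w ^ p` and `ρ x = G (x ^ (1/p)) ^ p` this reads `u s ≤ K ∫₀ˢ ρ (u t)`, and Osgood's
argument applies: for `δ > 0` the function `y = δ + K ∫₀ˢ ρ ∘ u` dominates `u` and satisfies
`y' ≤ K ρ (y)`, so `∫_δ^{u s} 1/ρ ≤ K s` uniformly in `δ`, which contradicts the divergence of
`∫_{0+} 1/ρ` unless `u s = 0`. Since `G ≤ 1` near `0`, `1/ρ` diverges wherever `1/G(x^(1/p))` does.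
-/

open MeasureTheory Set Filter Topology intervalIntegral

theorem memLp_ofReal_of_integrable_rpow {α : Type*} [MeasurableSpace α] {μ : Measure α}
    {f : α → ℝ} {p : ℝ} (hp : 0 < p) (hf : AEStronglyMeasurable f μ) (hf0 : 0 ≤ᵐ[μ] f)
    (hfp : Integrable (fun x => f x ^ p) μ) : MemLp f (ENNReal.ofReal p) μ := by
  refine (integrable_norm_rpow_iff hf (by simpa using hp) ENNReal.ofReal_ne_top).1 ?_
  rw [ENNReal.toReal_ofReal hp.le]
  refine hfp.congr ?_
  filter_upwards [hf0] with x hx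
  rw [Real.norm_of_nonneg hx]

theorem intervalIntegral.integral_mul_le_Lp_mul_Lq_of_nonneg {a b p q : ℝ} (hab : a ≤ b)
    (hpq : p.HolderConjugate q) {f g : ℝ → ℝ} (hf0 : ∀ x ∈ Ioc a b, 0 ≤ f x)
    (hg0 : ∀ x ∈ Ioc a b, 0 ≤ g x) (hf : AEStronglyMeasurable f (volume.restrict (Ioc a b)))
    (hg : AEStronglyMeasurable g (volume.restrict (Ioc a b)))
    (hfp : IntervalIntegrable (fun x => f x ^ p) volume a b)
    (hgq : IntervalIntegrable (fun x => g x ^ q) volume a b) :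
    ∫ x in a..b, f x * g x ≤
      (∫ x in a..b, f x ^ p) ^ (1 / p) * (∫ x in a..b, g x ^ q) ^ (1 / q) := by
  simp only [integral_of_le hab]
  rw [intervalIntegrable_iff_integrableOn_Ioc_of_le hab] at hfp hgq
  have hf0' : 0 ≤ᵐ[volume.restrict (Ioc a b)] f :=
    (ae_restrict_iff' measurableSet_Ioc).2 (.of_forall hf0)
  have hg0' : 0 ≤ᵐ[volume.restrict (Ioc a b)] g :=
    (ae_restrict_iff' measurableSet_Ioc).2 (.of_forall hg0)
  exact MeasureTheory.integral_mul_le_Lp_mul_Lq_of_nonneg hpq hf0' hg0'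
    (memLp_ofReal_of_integrable_rpow hpq.pos hf hf0' hfp)
    (memLp_ofReal_of_integrable_rpow hpq.symm.pos hg hg0' hgq)

theorem ContinuousOn.hasDerivAt_integral_of_mem_Ioo {E : Type*} [NormedAddCommGroup E]
    [NormedSpace ℝ E] [CompleteSpace E] {f : ℝ → E} {a b r : ℝ} (hf : ContinuousOn f (Icc a b))
    (hr : r ∈ Ioo a b) : HasDerivAt (fun x => ∫ t in a..x, f t) (f r) r :=
  integral_hasDerivAt_right
    (hf.mono (by rw [uIcc_of_le hr.1.le]; exact Icc_subset_Icc_right hr.2.le)).intervalIntegrable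
    ((hf.mono Ioo_subset_Icc_self).stronglyMeasurableAtFilter isOpen_Ioo r hr)
    (hf.continuousAt (Icc_mem_nhds hr.1 hr.2))

theorem integrableOn_Ioc_of_integral_le {f : ℝ → ℝ} {a b I : ℝ} (hab : a < b)
    (hf : ContinuousOn f (Ioc a b)) (hf0 : ∀ x ∈ Ioc a b, 0 ≤ f x)
    (h : ∀ c ∈ Ioo a b, ∫ x in c..b, f x ≤ I) : IntegrableOn f (Ioc a b) := by
  obtain ⟨c, -, hc, hc_lim⟩ := exists_seq_strictAnti_tendsto' hab
  refine integrableOn_Ioc_of_intervalIntegral_norm_bounded_left (I := I) (fun n => ?_) hc_lim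
    (.of_forall fun n => ?_)
  · exact ((hf.mono (Icc_subset_Ioc (hc n).1 le_rfl)).integrableOn_compact isCompact_Icc).mono_set
      Ioc_subset_Icc_self
  · rw [← integral_of_le (hc n).2.le]
    refine le_of_eq_of_le (integral_congr fun x hx => ?_) (h (c n) (hc n))
    rw [uIcc_of_le (hc n).2.le] at hx
    exact Real.norm_of_nonneg (hf0 x ⟨(hc n).1.trans_le hx.1, hx.2⟩)

theorem not_integrableOn_Ioo_of_le {f g : ℝ → ℝ} {a : ℝ}
    (hf : ∀ b > a, ¬ IntegrableOn f (Ioo a b)) (hf_cont : ContinuousOn f (Ioi a))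
    (hfg : ∀ᶠ x in 𝓝[>] a, 0 ≤ f x ∧ f x ≤ g x) : ∀ b > a, ¬ IntegrableOn g (Ioo a b) := by
  intro b hb hg
  obtain ⟨c, hc, hfgc⟩ := (nhdsGT_basis a).eventually_iff.1 hfg
  refine hf (min b c) (lt_min hb hc)
    ((hg.mono_set (Ioo_subset_Ioo_right (min_le_left b c))).mono'
      ((hf_cont.mono Ioo_subset_Ioi_self).aestronglyMeasurable measurableSet_Ioo) ?_)
  refine (ae_restrict_iff' measurableSet_Ioo).2 (.of_forall fun x hx => ?_)
  obtain ⟨hfx, hfgx⟩ := hfgc ⟨hx.1, hx.2.trans_le (min_le_right b c)⟩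
  rwa [Real.norm_of_nonneg hfx]

theorem intervalIntegrable_one_add_rpow_neg_half_rpow {q T : ℝ} (hq1 : 1 ≤ q) (hq2 : q < 2)
    (hT : 0 ≤ T) : IntervalIntegrable (fun u : ℝ => (1 + u ^ (-(1:ℝ)/2)) ^ q) volume 0 T := by
  have hconvex : ∀ x : ℝ, 0 ≤ x → (1 + x) ^ q ≤ 2 ^ (q - 1) * (1 + x ^ q) := fun x hx => by
    lift x to NNReal using hx
    have h := NNReal.rpow_add_le_mul_rpow_add_rpow 1 x hq1
    rw [NNReal.one_rpow] at h
    exact_mod_cast h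
  have hbound : IntervalIntegrable (fun u : ℝ => 2 ^ (q - 1) * (1 + u ^ (-(q / 2)))) volume 0 T :=
    (intervalIntegrable_const.add (intervalIntegrable_rpow' (by linarith))).const_mul _
  refine hbound.mono_fun' (Measurable.aestronglyMeasurable (by fun_prop)) ?_
  rw [EventuallyLE, uIoc_of_le hT, ae_restrict_iff' measurableSet_Ioc]
  refine .of_forall fun u hu => ?_
  have hk : 0 ≤ u ^ (-(1:ℝ)/2) := Real.rpow_nonneg hu.1.le _
  rw [Real.norm_of_nonneg (Real.rpow_nonneg (by linarith) _)]
  convert hconvex _ hk using 3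
  rw [← Real.rpow_mul hu.1.le]
  ring_nf

theorem integral_mul_one_add_sub_rpow_neg_half_le {p q s T : ℝ} (hpq : p.HolderConjugate q)
    (hq : q < 2) (hs : s ∈ Icc 0 T) {φ : ℝ → ℝ} (hφ : ContinuousOn φ (Icc 0 s))
    (hφ0 : ∀ t ∈ Icc 0 s, 0 ≤ φ t) :
    ∫ t in 0..s, φ t * (1 + (s - t) ^ (-(1:ℝ)/2)) ≤
      (∫ t in 0..s, φ t ^ p) ^ (1 / p) * (∫ u in 0..T, (1 + u ^ (-(1:ℝ)/2)) ^ q) ^ (1 / q) := by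
  have hk := intervalIntegrable_one_add_rpow_neg_half_rpow hpq.symm.lt.le hq (hs.1.trans hs.2)
  have hks : IntervalIntegrable (fun u : ℝ => (1 + u ^ (-(1:ℝ)/2)) ^ q) volume 0 s :=
    hk.mono_set <| by
      rw [uIcc_of_le hs.1, uIcc_of_le (hs.1.trans hs.2)]
      exact Icc_subset_Icc_right hs.2
  have hk0 : ∀ u : ℝ, 0 ≤ u → 0 ≤ (1 + u ^ (-(1:ℝ)/2)) ^ q := fun u hu => by positivity
  calc ∫ t in 0..s, φ t * (1 + (s - t) ^ (-(1:ℝ)/2))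
      ≤ (∫ t in 0..s, φ t ^ p) ^ (1 / p) *
          (∫ t in 0..s, (1 + (s - t) ^ (-(1:ℝ)/2)) ^ q) ^ (1 / q) := by
        refine integral_mul_le_Lp_mul_Lq_of_nonneg hs.1 hpq
          (fun t ht => hφ0 t (Ioc_subset_Icc_self ht)) (fun t ht => ?_) ?_
          (Measurable.aestronglyMeasurable (by fun_prop)) ?_
          (by simpa using (hks.comp_sub_left s).symm)
        · have := sub_nonneg.2 ht.2
          positivity
        · exact (hφ.mono Ioc_subset_Icc_self).aestronglyMeasurable measurableSet_Ioc
        · exact (hφ.rpow_const fun t ht => Or.inr hpq.pos.le).intervalIntegrable_of_Icc hs.1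
    _ = (∫ t in 0..s, φ t ^ p) ^ (1 / p) *
          (∫ u in 0..s, (1 + u ^ (-(1:ℝ)/2)) ^ q) ^ (1 / q) := by
        rw [integral_comp_sub_left (fun u : ℝ => (1 + u ^ (-(1:ℝ)/2)) ^ q), sub_self, sub_zero]
    _ ≤ _ := by
        refine mul_le_mul_of_nonneg_left (Real.rpow_le_rpow ?_ ?_ hpq.symm.one_div_nonneg)
          (Real.rpow_nonneg (integral_nonneg hs.1 fun t ht => Real.rpow_nonneg (hφ0 t ht) p) _)
        · exact integral_nonneg hs.1 fun u hu => hk0 u hu.1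
        · refine integral_mono_interval le_rfl hs.1 hs.2 ?_ hk
          exact (ae_restrict_iff' measurableSet_Ioc).2 (.of_forall fun u hu => hk0 u hu.1.le)

theorem exists_rpow_le_mul_integral_rpow_of_le_singular_integral
    {T C p : ℝ} (hT : 0 < T) (hC : 0 < C) (hp : 2 < p) {v φ : ℝ → ℝ}
    (hv : ∀ s ∈ Ioc 0 T, 0 ≤ v s) (hφ : ContinuousOn φ (Icc 0 T)) (hφ0 : ∀ t ∈ Icc 0 T, 0 ≤ φ t)
    (h : ∀ s ∈ Ioc 0 T, v s ≤ C * ∫ t in 0..s, φ t * (1 + (s - t) ^ (-(1:ℝ)/2))) :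
    ∃ K > 0, ∀ s ∈ Ioc 0 T, v s ^ p ≤ K * ∫ t in 0..s, φ t ^ p := by
  set q := p.conjExponent
  have hpq : p.HolderConjugate q := .conjExponent (by linarith)
  have hq : q < 2 := by
    rw [show q = p / (p - 1) from rfl, div_lt_iff₀ (by linarith)]
    linarith
  set M := ∫ u in 0..T, (1 + u ^ (-(1:ℝ)/2)) ^ q
  have hM : 0 < M := by
    refine intervalIntegral_pos_of_pos_on
      (intervalIntegrable_one_add_rpow_neg_half_rpow hpq.symm.lt.le hq hT.le) (fun u hu => ?_) hT
    have := hu.1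
    positivity
  refine ⟨C ^ p * M ^ (p - 1), by positivity, fun s hs => ?_⟩
  set A := ∫ t in 0..s, φ t ^ p
  have hA : 0 ≤ A :=
    integral_nonneg hs.1.le fun t ht => Real.rpow_nonneg (hφ0 t ⟨ht.1, ht.2.trans hs.2⟩) p
  have hvs : v s ≤ C * (A ^ (1 / p) * M ^ (1 / q)) :=
    (h s hs).trans <| mul_le_mul_of_nonneg_left (integral_mul_one_add_sub_rpow_neg_half_le hpq hq
      (Ioc_subset_Icc_self hs) (hφ.mono (Icc_subset_Icc_right hs.2))
      fun t ht => hφ0 t ⟨ht.1, ht.2.trans hs.2⟩) hC.le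
  calc v s ^ p ≤ (C * (A ^ (1 / p) * M ^ (1 / q))) ^ p :=
        Real.rpow_le_rpow (hv s hs) hvs (by linarith)
    _ = C ^ p * M ^ (p - 1) * A := by
        rw [Real.mul_rpow hC.le (by positivity), Real.mul_rpow (by positivity) (by positivity),
          ← Real.rpow_mul hA, ← Real.rpow_mul hM.le, one_div_mul_cancel (by linarith),
          Real.rpow_one, one_div_mul_eq_div, hpq.div_conj_eq_sub_one]
        ring

section Osgood

variable {ρ u : ℝ → ℝ} {K T : ℝ}

theorem integral_inv_le_mul_of_le_integral (hρ : ContinuousOn ρ (Ici 0))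
    (hρ_mono : MonotoneOn ρ (Ici 0)) (hρ_pos : ∀ x, 0 < x → 0 < ρ x)
    (hu : ContinuousOn u (Icc 0 T)) (hu0 : ∀ t ∈ Icc 0 T, 0 ≤ u t) (hK : 0 ≤ K)
    (hle : ∀ s ∈ Ioc 0 T, u s ≤ K * ∫ t in 0..s, ρ (u t)) {δ s : ℝ} (hδ : 0 < δ)
    (hs : s ∈ Icc 0 T) :
    ∫ x in δ..δ + K * ∫ t in 0..s, ρ (u t), (ρ x)⁻¹ ≤ K * s := by
  set y : ℝ → ℝ := fun r => δ + K * ∫ t in 0..r, ρ (u t) with hy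
  have hsI : uIcc 0 s = Icc 0 s := uIcc_of_le hs.1
  have hsub : Icc 0 s ⊆ Icc 0 T := Icc_subset_Icc_right hs.2
  have hρu : ContinuousOn (fun t => ρ (u t)) (Icc 0 s) := (hρ.comp hu hu0).mono hsub
  have hy_cont : ContinuousOn y (Icc 0 s) := by
    rw [← hsI]
    exact continuousOn_const.add (continuousOn_const.mul
      (continuousOn_primitive_interval (by rw [hsI]; exact hρu.integrableOn_Icc)))
  have hy_deriv : ∀ r ∈ Ioo 0 s, HasDerivAt y (K * ρ (u r)) r := fun r hr =>
    ((hρu.hasDerivAt_integral_of_mem_Ioo hr).const_mul K).const_add δ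
  have hu_le_y : ∀ r ∈ Ioc 0 s, u r ≤ y r - δ := fun r hr => by
    simpa [hy] using hle r ⟨hr.1, hr.2.trans hs.2⟩
  have hy_ge : ∀ r ∈ Icc 0 s, δ ≤ y r := by
    intro r hr
    rcases hr.1.eq_or_lt with rfl | hr0
    · simp [hy]
    · linarith [hu_le_y r ⟨hr0, hr.2⟩, hu0 r (hsub hr)]
  have hinv : ContinuousOn (fun x => (ρ x)⁻¹) (Ici δ) :=
    (hρ.mono (Ici_subset_Ici.2 hδ.le)).inv₀ fun x hx => (hρ_pos x (hδ.trans_le hx)).ne'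
  -- substitute `x = y r`: since `y' = K ρ (u r)` and `u ≤ y`, the new integrand is at most `K`
  calc ∫ x in δ..y s, (ρ x)⁻¹
      = ∫ r in 0..s, ((fun x => (ρ x)⁻¹) ∘ y) r * (K * ρ (u r)) := by
        rw [integral_comp_mul_deriv'' (hsI ▸ hy_cont) ?_ (hsI ▸ continuousOn_const.mul hρu)
          (hinv.mono (hsI ▸ image_subset_iff.2 hy_ge))]
        · simp [hy]
        · simpa [hs.1] using fun r hr => (hy_deriv r hr).hasDerivWithinAt
    _ ≤ ∫ _ in 0..s, K := by
        refine integral_mono_on_of_le_Ioo hs.1 ?_ intervalIntegrable_const fun r hr => ?_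
        · exact ((hinv.comp hy_cont hy_ge).mul
            (continuousOn_const.mul hρu)).intervalIntegrable_of_Icc hs.1
        · have hyr : δ ≤ y r := hy_ge r (Ioo_subset_Icc_self hr)
          have hρle : ρ (u r) ≤ ρ (y r) := hρ_mono (hu0 r (hsub (Ioo_subset_Icc_self hr)))
            (hδ.le.trans hyr) (by linarith [hu_le_y r (Ioo_subset_Ioc_self hr)])
          rw [Function.comp_apply, inv_mul_le_iff₀ (hρ_pos _ (hδ.trans_le hyr))]
          simpa [mul_comm] using mul_le_mul_of_nonneg_left hρle hK
    _ = K * s := by simp [mul_comm]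

theorem eqOn_zero_of_le_integral_of_not_integrableOn (hρ : ContinuousOn ρ (Ici 0))
    (hρ_mono : MonotoneOn ρ (Ici 0)) (hρ_pos : ∀ x, 0 < x → 0 < ρ x)
    (hρ_osgood : ∀ ε > 0, ¬ IntegrableOn (fun x => (ρ x)⁻¹) (Ioo 0 ε)) (hT : 0 < T)
    (hu : ContinuousOn u (Icc 0 T)) (hu0 : ∀ t ∈ Icc 0 T, 0 ≤ u t) (hK : 0 ≤ K)
    (hle : ∀ s ∈ Ioc 0 T, u s ≤ K * ∫ t in 0..s, ρ (u t)) : EqOn u 0 (Icc 0 T) := by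
  have hinv : ContinuousOn (fun x => (ρ x)⁻¹) (Ioi 0) :=
    (hρ.mono Ioi_subset_Ici_self).inv₀ fun x hx => (hρ_pos x hx).ne'
  have hinv0 : ∀ x ∈ Ioi (0 : ℝ), 0 ≤ (ρ x)⁻¹ := fun x hx => (inv_pos.2 (hρ_pos x hx)).le
  have hzero : EqOn u 0 (Ioc 0 T) := by
    intro s hs
    by_contra hne
    have ha : 0 < u s := (hu0 s (Ioc_subset_Icc_self hs)).lt_of_ne' hne
    refine hρ_osgood (u s) ha ((integrableOn_Ioc_of_integral_le (I := K * s) ha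
      (hinv.mono Ioc_subset_Ioi_self) (fun x hx => hinv0 x hx.1) fun δ hδ => ?_).mono_set
      Ioo_subset_Ioc_self)
    have hy : u s ≤ δ + K * ∫ t in 0..s, ρ (u t) := by linarith [hle s hs, hδ.1]
    calc ∫ x in δ..u s, (ρ x)⁻¹ ≤ ∫ x in δ..δ + K * ∫ t in 0..s, ρ (u t), (ρ x)⁻¹ := by
          refine integral_mono_interval le_rfl hδ.2.le hy ?_ ?_
          · exact (ae_restrict_iff' measurableSet_Ioc).2
              (.of_forall fun x hx => hinv0 x (hδ.1.trans hx.1))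
          · refine (hinv.mono fun x hx => ?_).intervalIntegrable
            rw [uIcc_of_le (hδ.2.le.trans hy)] at hx
            exact hδ.1.trans_le hx.1
      _ ≤ K * s := integral_inv_le_mul_of_le_integral hρ hρ_mono hρ_pos hu hu0 hK hle hδ.1
          (Ioc_subset_Icc_self hs)
  exact hzero.of_subset_closure hu continuousOn_const Ioc_subset_Icc_self
    (by rw [closure_Ioc hT.ne])

end Osgood

theorem not_integrableOn_inv_rpow_of_tendsto_zero {g : ℝ → ℝ} {p : ℝ} (hp : 1 ≤ p)
    (hg : ContinuousOn g (Ioi 0)) (hg_pos : ∀ x, 0 < x → 0 < g x)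
    (hg_lim : Tendsto g (𝓝[>] 0) (𝓝 0)) (h : ∀ ε > 0, ¬ IntegrableOn (fun x => 1 / g x) (Ioo 0 ε)) :
    ∀ ε > 0, ¬ IntegrableOn (fun x => (g x ^ p)⁻¹) (Ioo 0 ε) := by
  refine not_integrableOn_Ioo_of_le h
    (continuousOn_const.div hg fun x hx => (hg_pos x hx).ne') ?_
  filter_upwards [hg_lim.eventually_le_const zero_lt_one, self_mem_nhdsWithin] with x hx1 hx
  have hx0 := hg_pos x hx
  refine ⟨by positivity, ?_⟩
  rw [one_div]
  exact inv_anti₀ (by positivity) (by simpa using Real.rpow_le_rpow_of_exponent_ge hx0 hx1 hp)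

theorem eqOn_zero_of_rpow_le_integral_rpow {w G : ℝ → ℝ} {K T p : ℝ} (hp : 1 ≤ p) (hT : 0 < T)
    (hw : ContinuousOn w (Icc 0 T)) (hw0 : ∀ t ∈ Icc 0 T, 0 ≤ w t)
    (hG : ContinuousOn G (Ici 0)) (hG_mono : StrictMonoOn G (Ici 0)) (hG0 : G 0 = 0) (hK : 0 ≤ K)
    (hG_osgood : ∀ ε > 0, ¬ IntegrableOn (fun x => 1 / G (x ^ (1 / p))) (Ioo 0 ε))
    (hle : ∀ s ∈ Ioc 0 T, w s ^ p ≤ K * ∫ t in 0..s, G (w t) ^ p) : EqOn w 0 (Icc 0 T) := by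
  have hp0 : 0 < p := by linarith
  have hG_nonneg : ∀ y ∈ Ici (0 : ℝ), 0 ≤ G y := fun y hy =>
    hG0 ▸ hG_mono.monotoneOn self_mem_Ici hy hy
  have hG_pos : ∀ x, 0 < x → 0 < G (x ^ (1 / p)) := fun x hx => by
    simpa [hG0] using hG_mono self_mem_Ici (Real.rpow_nonneg hx.le _) (by positivity)
  have hGr : ContinuousOn (fun x => G (x ^ (1 / p))) (Ici 0) :=
    hG.comp (fun x _ =>
      (Real.continuousAt_rpow_const x _ (Or.inr (by positivity))).continuousWithinAt)
      fun x hx => Real.rpow_nonneg hx _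
  have hGr_lim : Tendsto (fun x => G (x ^ (1 / p))) (𝓝[>] 0) (𝓝 0) := by
    simpa [ContinuousWithinAt, hG0, hp0.ne'] using
      (hGr 0 self_mem_Ici).mono Ioi_subset_Ici_self
  have hρ_mono : MonotoneOn (fun x => G (x ^ (1 / p)) ^ p) (Ici 0) := fun x hx y hy hxy => by
    have hx' : x ^ (1 / p) ∈ Ici 0 := Real.rpow_nonneg hx _
    exact Real.rpow_le_rpow (hG_nonneg _ hx') (hG_mono.monotoneOn hx' (Real.rpow_nonneg hy _)
      (Real.rpow_le_rpow hx hxy (by positivity))) hp0.le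
  have hwp := eqOn_zero_of_le_integral_of_not_integrableOn
    (hGr.rpow_const fun _ _ => Or.inr hp0.le) hρ_mono
    (fun x hx => Real.rpow_pos_of_pos (hG_pos x hx) p)
    (not_integrableOn_inv_rpow_of_tendsto_zero hp (hGr.mono Ioi_subset_Ici_self) hG_pos hGr_lim
      hG_osgood) hT
    (hw.rpow_const fun _ _ => Or.inr hp0.le) (fun t ht => Real.rpow_nonneg (hw0 t ht) p) hK
    fun s hs => (hle s hs).trans_eq <| congrArg (K * ·) <| integral_congr fun t ht => by
      rw [uIcc_of_le hs.1.le] at ht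
      simp only [one_div, Real.rpow_rpow_inv (hw0 t ⟨ht.1, ht.2.trans hs.2⟩) hp0.ne']
  exact fun s hs => (Real.rpow_eq_zero (hw0 s hs) hp0.ne').1 (hwp hs)

theorem stmt12_general (T C p : ℝ) (hT : 0 < T) (hC : 0 < C) (hp : 2 < p)
    (w G : ℝ → ℝ) (hwc : ContinuousOn w (Set.Icc 0 T))
    (hwnn : ∀ t ∈ Set.Icc 0 T, 0 ≤ w t)
    (hGc : ContinuousOn G (Set.Ici 0)) (hGmono : StrictMonoOn G (Set.Ici 0))
    (hG0 : G 0 = 0) (hGnn : ∀ u : ℝ, 0 ≤ u → 0 ≤ G u)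
    (hineq : ∀ s ∈ Set.Ioc 0 T,
      w s ≤ C * ∫ t in (0 : ℝ)..s, G (w t) * (1 + (s - t) ^ (-(1 : ℝ) / 2))) :
    (∃ Ct > (0 : ℝ), ∀ s ∈ Set.Ioc 0 T, w s ^ p ≤ Ct * ∫ t in (0 : ℝ)..s, G (w t) ^ p) ∧
    ((∀ ε > (0 : ℝ), ¬ IntegrableOn (fun u : ℝ => 1 / G (u ^ (1 / p))) (Set.Ioo 0 ε)) →
      ∀ s ∈ Set.Icc 0 T, w s = 0) := by
  obtain ⟨K, hK, hle⟩ := exists_rpow_le_mul_integral_rpow_of_le_singular_integral hT hC hp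
    (fun s hs => hwnn s (Ioc_subset_Icc_self hs)) (hGc.comp hwc hwnn)
    (fun t ht => hGnn _ (hwnn t ht)) hineq
  refine ⟨⟨K, hK, hle⟩, fun hosgood s hs => ?_⟩
  exact eqOn_zero_of_rpow_le_integral_rpow (by linarith) hT hwc hwnn hGc hGmono hG0 hK.le hosgood
    hle hs

theorem stmt12 (T C p : ℝ) (hT : 0 < T) (hC : 0 < C) (hp : 2 < p)
    (w G : ℝ → ℝ) (hwc : ContinuousOn w (Set.Icc 0 T))
    (hwnn : ∀ t ∈ Set.Icc 0 T, 0 ≤ w t)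
    (hwbd : ∃ K : ℝ, ∀ t ∈ Set.Icc 0 T, w t ≤ K)
    (hGc : ContinuousOn G (Set.Ici 0)) (hGmono : StrictMonoOn G (Set.Ici 0))
    (hG0 : G 0 = 0) (hGnn : ∀ u : ℝ, 0 ≤ u → 0 ≤ G u)
    (hineq : ∀ s ∈ Set.Ioc 0 T,
      w s ≤ C * ∫ t in (0 : ℝ)..s, G (w t) * (1 + (s - t) ^ (-(1 : ℝ) / 2))) :
    (∃ Ct > (0 : ℝ), ∀ s ∈ Set.Ioc 0 T, w s ^ p ≤ Ct * ∫ t in (0 : ℝ)..s, G (w t) ^ p) ∧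
    ((∀ ε > (0 : ℝ), ¬ IntegrableOn (fun u : ℝ => 1 / G (u ^ (1 / p))) (Set.Ioo 0 ε)) →
      ∀ s ∈ Set.Icc 0 T, w s = 0) :=
  stmt12_general T C p hT hC hp w G hwc hwnn hGc hGmono hG0 hGnn hineq
end

section
/- Define F(g) = (1/√π) e^{−1/(4g²)} + (1/g)Φ(1/(2g)) − 1/(2g) − g for g > 0, where Φ(x) = π^{−1/2} ∫_{−∞}^x e^{−y²} dy. Then F'(g) ≤ −1 for all g > 0; consequently F is strictly decreasing on (0,∞), tends to +∞ as g → 0+ and to −∞ as g → ∞, and has a unique zero g₀ ∈ (0,1). -/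
/-- `Φ(x) = π^{-1/2} ∫_{-∞}^x e^{-y²} dy`. -/
noncomputable def PhiErf (x : ℝ) : ℝ :=
  (Real.sqrt Real.pi)⁻¹ * ∫ y in Set.Iic x, Real.exp (-y ^ 2)

/-- `F(g) = (1/√π) e^{-1/(4g²)} + (1/g)Φ(1/(2g)) − 1/(2g) − g`. -/
noncomputable def Fcal (g : ℝ) : ℝ :=
  (Real.sqrt Real.pi)⁻¹ * Real.exp (-(1 / (4 * g ^ 2)))
    + (1 / g) * PhiErf (1 / (2 * g)) - 1 / (2 * g) - g

/-!
With `G x = ∫₀ˣ e^{-y²} dy` we have `Φ x = 1/2 + G x / √π`, so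
`F g = (e^{-1/(4g²)} + G(1/(2g)) / g) / √π - g`. Differentiating, the two exponential terms
cancel and `F' g = -G(1/(2g)) / (√π g²) - 1 ≤ -1`. The elementary bounds `e⁻¹ ≤ G x` for `x ≥ 1`
and `G x ≤ x` for `x ≥ 0` give `F g ≥ e⁻¹ / (√π g) - g` near `0` and `F g ≤ 3 / (2√π) - g` for
`g ≥ 1`; in particular `F 1 < 0` because `√π > 3/2`. The zero then comes from the intermediate
value theorem.
-/

open Real MeasureTheory Set Filter Topology

lemma integrable_exp_neg_sq : Integrable fun y : ℝ => exp (-y ^ 2) := by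
  simpa using integrable_exp_neg_mul_sq one_pos

lemma setIntegral_Iic_zero_exp_neg_sq : ∫ y in Iic (0 : ℝ), exp (-y ^ 2) = √π / 2 := by
  have hsymm := integral_comp_neg_Iic 0 fun y => exp (-y ^ 2)
  have hhalf := integral_gaussian_Ioi 1
  simp only [neg_sq, neg_zero, neg_one_mul, div_one] at hsymm hhalf
  rw [hsymm, hhalf]

lemma PhiErf_eq_half_add (x : ℝ) :
    PhiErf x = 1 / 2 + (√π)⁻¹ * ∫ y in (0 : ℝ)..x, exp (-y ^ 2) := by
  have hsplit := intervalIntegral.integral_Iic_sub_Iic (a := 0) (b := x)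
    integrable_exp_neg_sq.integrableOn integrable_exp_neg_sq.integrableOn
  rw [PhiErf, ← hsplit, setIntegral_Iic_zero_exp_neg_sq]
  field_simp
  ring

lemma Fcal_eq (g : ℝ) :
    Fcal g = (√π)⁻¹ * (exp (-(1 / (4 * g ^ 2))) + (∫ y in (0 : ℝ)..1 / (2 * g), exp (-y ^ 2)) / g)
      - g := by
  rw [Fcal, PhiErf_eq_half_add]
  ring

lemma integral_exp_neg_sq_nonneg {x : ℝ} (hx : 0 ≤ x) : 0 ≤ ∫ y in (0 : ℝ)..x, exp (-y ^ 2) :=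
  intervalIntegral.integral_nonneg hx fun _ _ => (exp_pos _).le

lemma integral_exp_neg_sq_le {x : ℝ} (hx : 0 ≤ x) : ∫ y in (0 : ℝ)..x, exp (-y ^ 2) ≤ x := by
  simpa using intervalIntegral.integral_mono_on hx integrable_exp_neg_sq.intervalIntegrable
    intervalIntegrable_const fun y _ => exp_le_one_iff.2 (neg_nonpos.2 (sq_nonneg y))

lemma exp_neg_one_le_integral_exp_neg_sq {x : ℝ} (hx : 1 ≤ x) :
    exp (-1) ≤ ∫ y in (0 : ℝ)..x, exp (-y ^ 2) :=
  calc exp (-1) = ∫ _ in (0 : ℝ)..1, exp (-1) := by simp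
    _ ≤ ∫ y in (0 : ℝ)..1, exp (-y ^ 2) :=
      intervalIntegral.integral_mono_on zero_le_one intervalIntegrable_const
        integrable_exp_neg_sq.intervalIntegrable fun y hy => by
          rw [exp_le_exp, neg_le_neg_iff]; nlinarith [hy.1, hy.2]
    _ ≤ ∫ y in (0 : ℝ)..x, exp (-y ^ 2) :=
      intervalIntegral.integral_mono_interval le_rfl zero_le_one hx
        (Eventually.of_forall fun y => (exp_pos _).le) integrable_exp_neg_sq.intervalIntegrable

lemma hasDerivAt_integral_exp_neg_sq (x : ℝ) :
    HasDerivAt (fun x => ∫ y in (0 : ℝ)..x, exp (-y ^ 2)) (exp (-x ^ 2)) x :=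
  (by fun_prop : Continuous fun y : ℝ => exp (-y ^ 2)).integral_hasStrictDerivAt 0 x |>.hasDerivAt

lemma hasDerivAt_Fcal {g : ℝ} (hg : g ≠ 0) :
    HasDerivAt Fcal
      (-((√π)⁻¹ * (∫ y in (0 : ℝ)..1 / (2 * g), exp (-y ^ 2)) / g ^ 2) - 1) g := by
  have hu : HasDerivAt (fun g : ℝ => 1 / (2 * g)) (-1 / (2 * g ^ 2)) g := by
    have h := ((hasDerivAt_id g).const_mul 2).inv (mul_ne_zero two_ne_zero hg)
    simp only [id, ← one_div] at h
    exact h.congr_deriv (by ring)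
  have hE : HasDerivAt (fun g : ℝ => exp (-(1 / (4 * g ^ 2))))
      (exp (-(1 / (4 * g ^ 2))) * (1 / (2 * g ^ 3))) g := by
    have hq : HasDerivAt (fun g : ℝ => -(4 * g ^ 2)⁻¹) (1 / (2 * g ^ 3)) g :=
      (((hasDerivAt_pow 2 g).const_mul 4).inv (by positivity)).neg.congr_deriv (by field_simp; ring)
    simpa only [one_div] using hq.exp
  have hG := (hasDerivAt_integral_exp_neg_sq (1 / (2 * g))).comp g hu
  rw [show -(1 / (2 * g)) ^ 2 = -(1 / (4 * g ^ 2)) by ring] at hG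
  have hF := ((hE.add (hG.div (hasDerivAt_id g) hg)).const_mul (√π)⁻¹).sub (hasDerivAt_id g)
  rw [show Fcal = _ from funext Fcal_eq]
  refine hF.congr_deriv ?_
  simp only [Function.comp_apply, id]
  field_simp
  ring

lemma deriv_Fcal_le {g : ℝ} (hg : 0 < g) : deriv Fcal g ≤ -1 := by
  rw [(hasDerivAt_Fcal hg.ne').deriv]
  have hG := integral_exp_neg_sq_nonneg (by positivity : 0 ≤ 1 / (2 * g))
  have : 0 ≤ (√π)⁻¹ * (∫ y in (0 : ℝ)..1 / (2 * g), exp (-y ^ 2)) / g ^ 2 := by positivity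
  linarith

lemma continuousOn_Fcal : ContinuousOn Fcal (Ioi 0) :=
  fun _ hg => (hasDerivAt_Fcal (ne_of_gt hg)).continuousAt.continuousWithinAt

lemma strictAntiOn_Fcal : StrictAntiOn Fcal (Ioi 0) :=
  strictAntiOn_of_deriv_neg (convex_Ioi 0) continuousOn_Fcal fun g hg => by
    rw [interior_Ioi] at hg
    linarith [deriv_Fcal_le hg]

lemma tendsto_Fcal_nhdsGT_zero : Tendsto Fcal (𝓝[>] 0) atTop := by
  set c := (√π)⁻¹ * exp (-1)
  have hbound : ∀ g ∈ Ioc (0 : ℝ) (1 / 2), c * g⁻¹ + -g ≤ Fcal g := by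
    rintro g ⟨hg, hg'⟩
    have hx : 1 ≤ 1 / (2 * g) := by rw [le_div_iff₀ (by positivity)]; linarith
    have hG := exp_neg_one_le_integral_exp_neg_sq hx
    rw [Fcal_eq]
    have hint : c * g⁻¹ ≤ (√π)⁻¹ * ((∫ y in (0 : ℝ)..1 / (2 * g), exp (-y ^ 2)) / g) := by
      rw [mul_assoc, div_eq_mul_inv]
      gcongr
    have hexp : 0 ≤ (√π)⁻¹ * exp (-(1 / (4 * g ^ 2))) := by positivity
    linarith
  refine tendsto_atTop_mono' _ (eventually_of_mem (Ioc_mem_nhdsGT one_half_pos) hbound) ?_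
  refine (tendsto_inv_nhdsGT_zero.const_mul_atTop (by positivity)).atTop_add (C := 0) ?_
  simpa using (tendsto_neg (0 : ℝ)).mono_left nhdsWithin_le_nhds

lemma Fcal_le {g : ℝ} (hg : 1 ≤ g) : Fcal g ≤ 3 / (2 * √π) - g := by
  have hg0 : 0 < g := one_pos.trans_le hg
  have hG := integral_exp_neg_sq_le (by positivity : 0 ≤ 1 / (2 * g))
  have hE : exp (-(1 / (4 * g ^ 2))) ≤ 1 := exp_le_one_iff.2 (neg_nonpos.2 (by positivity))
  have hGg : (∫ y in (0 : ℝ)..1 / (2 * g), exp (-y ^ 2)) / g ≤ 1 / 2 := by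
    rw [div_le_iff₀ hg0]
    calc _ ≤ 1 / (2 * g) := hG
      _ ≤ 1 / 2 * g := by rw [div_le_iff₀ (by positivity)]; nlinarith
  calc Fcal g
      = (√π)⁻¹ * (exp (-(1 / (4 * g ^ 2))) + (∫ y in (0 : ℝ)..1 / (2 * g), exp (-y ^ 2)) / g)
        - g := Fcal_eq g
    _ ≤ (√π)⁻¹ * (1 + 1 / 2) - g := by gcongr
    _ = 3 / (2 * √π) - g := by ring

lemma three_div_two_mul_sqrt_pi_lt_one : 3 / (2 * √π) < 1 := by
  have : 3 / 2 < √π := by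
    rw [lt_sqrt (by norm_num)]
    nlinarith [pi_gt_three]
  rw [div_lt_one (by positivity)]
  linarith

lemma tendsto_Fcal_atTop : Tendsto Fcal atTop atBot :=
  tendsto_atBot_mono' _ ((eventually_ge_atTop 1).mono fun _ hg => Fcal_le hg)
    (tendsto_atBot_add_const_left _ _ tendsto_neg_atTop_atBot)

lemma Fcal_one_neg : Fcal 1 < 0 := by
  linarith [Fcal_le le_rfl, three_div_two_mul_sqrt_pi_lt_one]

lemma existsUnique_eq_of_strictAntiOn_Ioi {f : ℝ → ℝ} {a : ℝ} (c : ℝ)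
    (hf : ContinuousOn f (Ioi a)) (hanti : StrictAntiOn f (Ioi a))
    (hleft : Tendsto f (𝓝[>] a) atTop) (hright : Tendsto f atTop atBot) :
    ∃! x, a < x ∧ f x = c := by
  obtain ⟨x, hcx, hax⟩ := ((hleft.eventually_ge_atTop c).and self_mem_nhdsWithin).exists
  obtain ⟨y, hyc, hxy⟩ := ((hright.eventually_le_atBot c).and (eventually_ge_atTop x)).exists
  obtain ⟨z, hz, hfz⟩ := intermediate_value_Icc' hxy
    (hf.mono fun t ht => lt_of_lt_of_le hax ht.1) ⟨hyc, hcx⟩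
  have haz : a < z := lt_of_lt_of_le hax hz.1
  exact ⟨z, ⟨haz, hfz⟩, fun w ⟨haw, hfw⟩ => hanti.injOn haw haz (hfw.trans hfz.symm)⟩

theorem stmt15 :
    (∀ g : ℝ, 0 < g → deriv Fcal g ≤ -1) ∧
    StrictAntiOn Fcal (Set.Ioi 0) ∧
    Filter.Tendsto Fcal (nhdsWithin 0 (Set.Ioi 0)) Filter.atTop ∧
    Filter.Tendsto Fcal Filter.atTop Filter.atBot ∧
    (∃! g₀ : ℝ, 0 < g₀ ∧ Fcal g₀ = 0) ∧
    (∀ g₀ : ℝ, 0 < g₀ → Fcal g₀ = 0 → g₀ < 1) :=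
  ⟨fun _ => deriv_Fcal_le, strictAntiOn_Fcal, tendsto_Fcal_nhdsGT_zero, tendsto_Fcal_atTop,
    existsUnique_eq_of_strictAntiOn_Ioi 0 continuousOn_Fcal strictAntiOn_Fcal
      tendsto_Fcal_nhdsGT_zero tendsto_Fcal_atTop,
    fun _ hg₀ hzero =>
      (strictAntiOn_Fcal.lt_iff_gt (mem_Ioi.2 one_pos) hg₀).1 (hzero ▸ Fcal_one_neg)⟩
end
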